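/- Let W : Fin n → Fin n → ℝ be edge weights of a complete bipartite graph between n partitions and n fog nodes. Define the bottleneck value of a permutation σ as max_k W(k, σ(k)). Then min over all permutations σ of the bottleneck value equals the smallest threshold τ ∈ {W(k,j)} such that the bipartite graph with edge set {(k,j) : W(k,j) ≤ τ} admits a perfect matching. -/
import Mathlib


open Finset

/-- Correctness of the threshold-based LBAP algorithm (Algorithm 1):
the optimal bottleneck value equals the smallest weight threshold `τ`
admitting a perfect matching using only edges of weight ≤ τ. -/
theorem stmt_7 (n : ℕ) [NeZero n] (W : Fin n → Fin n → ℝ) :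
    (univ.inf' univ_nonempty fun σ : Equiv.Perm (Fin n) =>
        univ.sup' univ_nonempty fun k => W k (σ k)) =
      sInf {τ : ℝ | (∃ k j, W k j = τ) ∧
        ∃ σ : Equiv.Perm (Fin n), ∀ k, W k (σ k) ≤ τ} := by
  set S := {τ : ℝ | (∃ k j, W k j = τ) ∧
      ∃ σ : Equiv.Perm (Fin n), ∀ k, W k (σ k) ≤ τ}
  set L := (univ.inf' univ_nonempty fun σ : Equiv.Perm (Fin n) =>
      univ.sup' univ_nonempty fun k => W k (σ k)) with hL
  obtain ⟨σ₀, -, hσ₀⟩ := exists_mem_eq_inf' (univ_nonempty)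
    (fun σ : Equiv.Perm (Fin n) => univ.sup' univ_nonempty fun k => W k (σ k))
  obtain ⟨k₀, -, hk₀⟩ := exists_mem_eq_sup' (univ_nonempty) (fun k => W k (σ₀ k))
  have hLS : L ∈ S := by
    refine ⟨⟨k₀, σ₀ k₀, ?_⟩, σ₀, fun k => ?_⟩
    · rw [hL, hσ₀, hk₀]
    · rw [hL, hσ₀]
      exact le_sup' (fun k => W k (σ₀ k)) (mem_univ k)
  have hlb : ∀ τ ∈ S, L ≤ τ := by
    rintro τ ⟨-, σ, hσ⟩
    calc L ≤ univ.sup' univ_nonempty fun k => W k (σ k) :=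
          inf'_le _ (mem_univ σ)
      _ ≤ τ := sup'_le _ _ fun k _ => hσ k
  exact le_antisymm (le_csInf ⟨L, hLS⟩ hlb) (csInf_le ⟨L, hlb⟩ hLS)
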